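/- arXiv:1111.1609 — 3 statements merged into one kernel-verified Lean document; each statement's English description precedes it below -/
import Mathlib

section
/- Let Ξ be a right-infinite subshift over a finite alphabet with language ℒ. Then Ξ has bounded powers if and only if Ξ is repulsive, i.e. its index of repulsiveness ℓ is strictly positive. -/
open scoped ENNReal Classical

noncomputable section

namespace Arx1111

variable {A : Type*}

/-! ### Words and infinite words -/

/-- The left shift on right-infinite words. -/
def shift (ξ : ℕ → A) : ℕ → A := fun n => ξ (n + 1)

/-- The finite word `u` occurs in the infinite word `ξ` at position `k`. -/
def FactorAt (u : List A) (ξ : ℕ → A) (k : ℕ) : Prop :=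
  u = (List.range u.length).map fun i => ξ (k + i)

/-- `u` is a factor of the infinite word `ξ`. -/
def IsFactorOf (u : List A) (ξ : ℕ → A) : Prop := ∃ k, FactorAt u ξ k

/-- `u` is a prefix of the infinite word `ξ`. -/
def PrefixOfInf (u : List A) (ξ : ℕ → A) : Prop := FactorAt u ξ 0

/-- `u` is a proper prefix of `v`. -/
def PPrefix (u v : List A) : Prop := u <+: v ∧ u ≠ v

/-- The `n`-th power `u^n` of a finite word `u`. -/
def wordPow (u : List A) : ℕ → List A
  | 0 => []
  | n + 1 => u ++ wordPow u n

/-- The language of a set of infinite words: all finite factors of its elements. -/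
def language (Ξ : Set (ℕ → A)) : Set (List A) := {u | ∃ ξ ∈ Ξ, IsFactorOf u ξ}

/-! ### Subshifts -/

/-- `Ξ` is a (right-infinite) subshift: nonempty, closed, shift-invariant. -/
structure IsSubshift [TopologicalSpace A] (Ξ : Set (ℕ → A)) : Prop where
  nonempty : Ξ.Nonempty
  isClosed : IsClosed Ξ
  shift_mem : ∀ ξ ∈ Ξ, shift ξ ∈ Ξ

/-- Minimality: every orbit is dense in `Ξ`. -/
def IsMinimal [TopologicalSpace A] (Ξ : Set (ℕ → A)) : Prop :=
  ∀ ξ ∈ Ξ, Ξ ⊆ closure (Set.range fun n => shift^[n] ξ)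

/-- Aperiodicity. -/
def Aperiodic (Ξ : Set (ℕ → A)) : Prop :=
  ∀ ξ ∈ Ξ, ∀ n : ℕ, shift^[n] ξ = ξ → n = 0

/-! ### Occurrences, complete first returns, privileged words -/

variable [DecidableEq A]

/-- The number of occurrences of `u` as a factor of `w`. -/
def occCount (u w : List A) : ℕ :=
  ((List.range (w.length + 1)).filter fun k => (w.drop k).take u.length == u).length

/-- `u'` is a complete first return to `u`: if `u` is empty, `u'` is a single letter;
otherwise `u` is a prefix and a suffix of `u'` and occurs exactly twice in `u'`. -/
def IsCFR (u u' : List A) : Prop :=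
  if u = [] then u'.length = 1
  else u <+: u' ∧ u <:+ u' ∧ occCount u u' = 2

/-- Privileged words of order `n`. -/
inductive PrivOrder : ℕ → List A → Prop where
  | zero : PrivOrder 0 []
  | succ {n : ℕ} {u u' : List A} : PrivOrder n u → IsCFR u u' → PrivOrder (n + 1) u'

/-- A word is privileged if it is privileged of some order. -/
def IsPrivileged (u : List A) : Prop := ∃ n, PrivOrder n u

/-- `u'` is a complete first return to `u` inside the language `L`. -/
def CFRin (L : Set (List A)) (u u' : List A) : Prop := u' ∈ L ∧ IsCFR u u'

/-- `u` is right-special for the language `L`. -/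
def RightSpecial (L : Set (List A)) (u : List A) : Prop :=
  u ∈ L ∧ ∃ a b : A, a ≠ b ∧ u ++ [a] ∈ L ∧ u ++ [b] ∈ L

/-- `a(v)`: number of one-letter right extensions of `v` in `L`, minus one. -/
def aext (L : Set (List A)) (v : List A) : ℕ := Nat.card {a : A // v ++ [a] ∈ L} - 1

/-- `ã(v)`: number of complete first returns to `v` in `L`, minus one, if `v` is
privileged, and `0` otherwise. -/
def atil (L : Set (List A)) (v : List A) : ℕ :=
  if IsPrivileged v then Nat.card {u' : List A // CFRin L v u'} - 1 else 0

/-- `S(u)`: right-special words `r` with `u ⪯ r ≺ u'` for some complete first return `u'`. -/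
def Sset (L : Set (List A)) (u : List A) : Set (List A) :=
  {r | RightSpecial L r ∧ ∃ u', CFRin L u u' ∧ u <+: r ∧ PPrefix r u'}

/-- Right-special balanced: between a privileged word and any of its complete first
returns there is exactly one right-special word. -/
def RSBalanced (L : Set (List A)) : Prop :=
  ∀ u, IsPrivileged u → u ∈ L → ∀ u', CFRin L u u' →
    ∃! r, RightSpecial L r ∧ u <+: r ∧ PPrefix r u'

/-- `r'` is the shortest right-special word having `r` as a proper prefix. -/
def IsShortestRSExt (L : Set (List A)) (r r' : List A) : Prop :=
  RightSpecial L r' ∧ PPrefix r r' ∧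
    ∀ r'', RightSpecial L r'' → PPrefix r r'' → r'.length ≤ r''.length

/-- `r = φ⁽⁰⁾(u)`: `r` is the shortest right-special word having `u` as a prefix. -/
def IsPhi0 (L : Set (List A)) (u r : List A) : Prop :=
  RightSpecial L r ∧ u <+: r ∧ ∀ r', RightSpecial L r' → u <+: r' → r.length ≤ r'.length

/-- `H⁽¹⁾`: pairs of distinct one-letter right extensions of a common word. -/
def H1 (L : Set (List A)) (v₁ v₂ : List A) : Prop :=
  v₁ ∈ L ∧ v₂ ∈ L ∧ v₁ ≠ v₂ ∧ ∃ (w : List A) (a b : A), v₁ = w ++ [a] ∧ v₂ = w ++ [b]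

/-- `H̃⁽¹⁾`: pairs of distinct complete first returns to a common privileged word. -/
def TildeH1 (L : Set (List A)) (u₁ u₂ : List A) : Prop :=
  u₁ ≠ u₂ ∧ ∃ u, IsPrivileged u ∧ CFRin L u u₁ ∧ CFRin L u u₂

/-- Length of the longest common prefix of two finite words. -/
def lcpLenW (u v : List A) : ℕ := sSup {n | n ≤ u.length ∧ u.take n = v.take n}

/-- Length of the longest common privileged prefix of two finite words. -/
def weeLenW (u v : List A) : ℕ :=
  sSup {n | ∃ w : List A, IsPrivileged w ∧ w.length = n ∧ w <+: u ∧ w <+: v}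

/-- `φ⁽¹⁾`: the pair of one-letter extensions of `u₁ ∧ u₂` which are prefixes of
`u₁` resp. `u₂`. -/
def phi1 (u₁ u₂ : List A) : List A × List A :=
  (u₁.take (lcpLenW u₁ u₂ + 1), u₂.take (lcpLenW u₁ u₂ + 1))

/-! ### Bounded powers and repulsiveness -/

/-- Bounded powers: there is `p` such that no `(p+1)`-th power of a nonempty word
belongs to `L`. -/
def BoundedPowers (L : Set (List A)) : Prop :=
  ∃ p : ℕ, ∀ u ∈ L, u ≠ [] → wordPow u (p + 1) ∉ L

/-- The set of ratios `(|W|-|w|)/|w|` over words `w, W ∈ L` with `w` a nonempty proper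
prefix and a suffix of `W`. -/
def repulsionSet (L : Set (List A)) : Set ℝ :=
  {x | ∃ w W : List A, w ∈ L ∧ W ∈ L ∧ w ≠ [] ∧ PPrefix w W ∧ w <:+ W ∧
        x = ((W.length : ℝ) - (w.length : ℝ)) / (w.length : ℝ)}

/-- The index of repulsiveness `ℓ`. -/
def repulsionIndex (L : Set (List A)) : ℝ := sInf (repulsionSet L)

/-- Repulsive: `ℓ > 0`. -/
def Repulsive (L : Set (List A)) : Prop := 0 < repulsionIndex L

/-! ### Privileged prefixes of infinite words -/

/-- The `n`-th privileged prefix `ξ̃ₙ` of an infinite word `ξ`. -/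
def privPrefix (ξ : ℕ → A) : ℕ → List A
  | 0 => []
  | n + 1 =>
    if h : ∃ u', IsCFR (privPrefix ξ n) u' ∧ PrefixOfInf u' ξ then h.choose
    else privPrefix ξ n

/-- The order `ind(ξ ⩏ η)` of the longest common privileged prefix of two infinite
words; the word `ξ ⩏ η` itself is `privPrefix ξ (weeInd ξ η)`. -/
def weeInd (ξ η : ℕ → A) : ℕ := sSup {n | privPrefix ξ n = privPrefix η n}

/-- Length of the longest common prefix `ξ ∧ η` of two distinct infinite words. -/
def lcpLenInf (ξ η : ℕ → A) : ℕ := sInf {n | ξ n ≠ η n}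

/-! ### Choice functions, weight functions and the metrics -/

/-- A choice function for `Ξ`. -/
def IsChoiceFun (Ξ : Set (ℕ → A)) (τ : List A → ℕ → A) : Prop :=
  (∀ v ∈ language Ξ, τ v ∈ Ξ ∧ PrefixOfInf v (τ v)) ∧
  (∀ v ∈ language Ξ, ∀ w ∈ language Ξ, v.length < w.length →
    PrefixOfInf w (τ v) → τ w = τ v)

/-- A weight function. -/
structure IsWeight (δ : ℕ → ℝ) : Prop where
  pos : ∀ n, 0 < δ n
  strictAnti : StrictAnti δ
  tendsto_zero : Filter.Tendsto δ Filter.atTop (nhds 0)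
  submul : ∃ c : ℝ, 0 < c ∧ ∀ a b : ℕ, δ (a * b) ≤ c * δ a * δ b
  doubling : ∃ c : ℝ, 0 < c ∧ ∀ a : ℕ, c * δ a ≤ δ (2 * a)

variable [TopologicalSpace A]

/-- The metric `d_τ` associated to the right-special horizontal edges. -/
def dTau (Ξ : Set (ℕ → A)) (δ : ℕ → ℝ) (τ : List A → ℕ → A) (ξ η : ℕ → A) : ℝ≥0∞ :=
  ⨆ f : {f : (ℕ → A) → ℝ // ContinuousOn f Ξ ∧
      ∀ v₁ v₂, H1 (language Ξ) v₁ v₂ → |f (τ v₁) - f (τ v₂)| ≤ δ (lcpLenW v₁ v₂)},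
    ENNReal.ofReal |f.1 ξ - f.1 η|

/-- The metric `d̃_τ` associated to the privileged horizontal edges. -/
def dTilTau (Ξ : Set (ℕ → A)) (δ : ℕ → ℝ) (τ : List A → ℕ → A) (ξ η : ℕ → A) : ℝ≥0∞ :=
  ⨆ f : {f : (ℕ → A) → ℝ // ContinuousOn f Ξ ∧
      ∀ u₁ u₂, TildeH1 (language Ξ) u₁ u₂ → |f (τ u₁) - f (τ u₂)| ≤ δ (weeLenW u₁ u₂)},
    ENNReal.ofReal |f.1 ξ - f.1 η|

/-- `d_inf`. -/
def dInf (Ξ : Set (ℕ → A)) (δ : ℕ → ℝ) (ξ η : ℕ → A) : ℝ≥0∞ :=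
  ⨅ τ : {τ // IsChoiceFun Ξ τ}, dTau Ξ δ τ.1 ξ η

/-- `d_sup`. -/
def dSup (Ξ : Set (ℕ → A)) (δ : ℕ → ℝ) (ξ η : ℕ → A) : ℝ≥0∞ :=
  ⨆ τ : {τ // IsChoiceFun Ξ τ}, dTau Ξ δ τ.1 ξ η

/-- `d̃_inf`. -/
def dTilInf (Ξ : Set (ℕ → A)) (δ : ℕ → ℝ) (ξ η : ℕ → A) : ℝ≥0∞ :=
  ⨅ τ : {τ // IsChoiceFun Ξ τ}, dTilTau Ξ δ τ.1 ξ η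

/-- `d̃_sup`. -/
def dTilSup (Ξ : Set (ℕ → A)) (δ : ℕ → ℝ) (ξ η : ℕ → A) : ℝ≥0∞ :=
  ⨆ τ : {τ // IsChoiceFun Ξ τ}, dTilTau Ξ δ τ.1 ξ η

/-- `β̃_τ(ξ̃ₙ)`: equals `1` if the longest common privileged prefix of `τ(ξ̃ₙ)` and `ξ`
is `ξ̃ₙ`, and `0` otherwise. -/
def btil (τ : List A → ℕ → A) (ξ : ℕ → A) (n : ℕ) : ℝ≥0∞ :=
  if privPrefix (τ (privPrefix ξ n)) (weeInd (τ (privPrefix ξ n)) ξ) = privPrefix ξ n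
  then 1 else 0

/-! ### Zeta functions -/

/-- `ζ_k(s)` (with the convention `0⁰ = 0`). -/
def zeta (L : Set (List A)) (δ : ℕ → ℝ) (k : ℕ) (s : ℝ) : ℝ≥0∞ :=
  ∑' v : L, (if aext L (v : List A) = 0 then 0 else ((aext L (v : List A) : ℝ≥0∞)) ^ k) *
    ENNReal.ofReal (δ (v : List A).length ^ s)

/-- `ζ̃_k(s)` (with the convention `0⁰ = 0`). -/
def zetaTil (L : Set (List A)) (δ : ℕ → ℝ) (k : ℕ) (s : ℝ) : ℝ≥0∞ :=
  ∑' v : L, (if atil L (v : List A) = 0 then 0 else ((atil L (v : List A) : ℝ≥0∞)) ^ k) *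
    ENNReal.ofReal (δ (v : List A).length ^ s)

/-- Almost finite privileged rank. -/
def AlmostFiniteRank (L : Set (List A)) : Prop :=
  ∃ a b : ℝ, 0 < a ∧ 0 < b ∧ ∀ u, IsPrivileged u → u ∈ L → 2 ≤ u.length →
    (Nat.card {u' : List A // CFRin L u u'} : ℝ) ≤ a * (Real.log u.length) ^ b

/-! A nonempty word `w` that is a proper prefix and a suffix of `W` gives `W` the period
`q = |W| - |w|`, so `W` begins with the `m`-th power of its prefix of length `q` whenever
`m q ≤ |W|`. If no `(p+1)`-th power lies in `ℒ`, this forces `q / |w| ≥ 1 / (p+1)`; the set of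
these ratios is nonempty since over a finite alphabet some letter repeats, so `ℓ ≥ 1/(p+1)`.
Conversely, `u^(p+1) ∈ ℒ` exhibits `u^p` as such a `w` with ratio `1/p`, so `ℓ > 1/p`
rules out `(p+1)`-th powers. -/

end Arx1111

namespace Arx1111

variable {A : Type*}

lemma factorAt_iff_eq_map_range' {u : List A} {ξ : ℕ → A} {k : ℕ} :
    FactorAt u ξ k ↔ u = (List.range' k u.length).map ξ := by
  rw [FactorAt, List.range'_eq_map_range, List.map_map]
  rfl

lemma FactorAt.exists_of_infix {u v : List A} {ξ : ℕ → A} {k : ℕ} (hv : FactorAt v ξ k)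
    (huv : u <:+: v) : ∃ k', FactorAt u ξ k' := by
  obtain ⟨s, t, rfl⟩ := huv
  refine ⟨k + s.length, factorAt_iff_eq_map_range'.mpr ?_⟩
  have hu : u = ((s ++ u ++ t).drop s.length).take u.length := by simp
  rw [hu, factorAt_iff_eq_map_range'.mp hv, ← List.map_drop, ← List.map_take,
    List.drop_range', List.take_range'_of_length_ge (by simp)]
  simp

def FactorClosed (L : Set (List A)) : Prop :=
  ∀ ⦃u v : List A⦄, v ∈ L → u <:+: v → u ∈ L

lemma factorClosed_language (Ξ : Set (ℕ → A)) : FactorClosed (language Ξ) := by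
  rintro u v ⟨ξ, hξ, k, hv⟩ huv
  exact ⟨ξ, hξ, hv.exists_of_infix huv⟩

lemma wordPow_length (u : List A) : ∀ n, (wordPow u n).length = n * u.length
  | 0 => by simp [wordPow]
  | n + 1 => by simp [wordPow, wordPow_length u n]; ring

lemma wordPow_succ' (u : List A) : ∀ n, wordPow u (n + 1) = wordPow u n ++ u
  | 0 => by simp [wordPow]
  | n + 1 => by
    change u ++ wordPow u (n + 1) = (u ++ wordPow u n) ++ u
    rw [wordPow_succ' u n, List.append_assoc]

/-- `x ++ w = w ++ y` says that `w` has period `|x|`. -/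
lemma wordPow_prefix_of_append_eq {x y : List A} :
    ∀ {w : List A} (m : ℕ), x ++ w = w ++ y → m * x.length ≤ w.length → wordPow x m <+: w
  | _, 0, _, _ => List.nil_prefix
  | w, m + 1, h, hm => by
    obtain ⟨w', rfl⟩ : x <+: w :=
      List.prefix_of_prefix_length_le (h ▸ List.prefix_append x w) (List.prefix_append w y)
        (by nlinarith)
    have h' : x ++ w' = w' ++ y := by simpa using h
    have hm' : m * x.length ≤ w'.length := by
      simp only [List.length_append, Nat.succ_mul] at hm
      omega
    exact (List.prefix_append_right_inj x).mpr (wordPow_prefix_of_append_eq m h' hm')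

/-- Writing `W = u ++ w`, the ratio `(|W| - |w|) / |w|` of a border `w` of `W` is `|u| / |w|`. -/
lemma mem_repulsionSet_iff {L : Set (List A)} (hL : FactorClosed L) {r : ℝ} :
    r ∈ repulsionSet L ↔ ∃ u w : List A, u ≠ [] ∧ w ≠ [] ∧ u ++ w ∈ L ∧ w <+: u ++ w ∧
      r = (u.length : ℝ) / w.length := by
  constructor
  · rintro ⟨w, _, -, hW, hw, ⟨hpre, hne⟩, ⟨u, rfl⟩, rfl⟩
    refine ⟨u, w, ?_, hw, hW, hpre, ?_⟩
    · rintro rfl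
      exact hne rfl
    · push_cast [List.length_append]
      ring
  · rintro ⟨u, w, hu, hw, hL', hpre, rfl⟩
    refine ⟨w, u ++ w, hL hL' hpre.isInfix, hL', hw, ⟨hpre, ?_⟩, List.suffix_append u w, ?_⟩
    · intro h
      exact hu (by simpa using congrArg List.length h)
    · push_cast [List.length_append]
      ring

lemma repulsionSet_nonneg {L : Set (List A)} {r : ℝ} (hr : r ∈ repulsionSet L) : 0 ≤ r := by
  obtain ⟨w, W, -, -, -, ⟨hpre, -⟩, -, rfl⟩ := hr
  exact div_nonneg (sub_nonneg.mpr (by exact_mod_cast hpre.length_le)) (Nat.cast_nonneg _)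

lemma one_div_le_of_mem_repulsionSet {L : Set (List A)} (hL : FactorClosed L) {p : ℕ}
    (hp : ∀ u ∈ L, u ≠ [] → wordPow u (p + 1) ∉ L) {r : ℝ} (hr : r ∈ repulsionSet L) :
    1 / (p + 1) ≤ r := by
  obtain ⟨u, w, hu, hw, huw, hpre, rfl⟩ := (mem_repulsionSet_iff hL).mp hr
  obtain ⟨y, hy⟩ := hpre
  have hlen : w.length ≤ (p + 1) * u.length := by
    by_contra! hlt
    have hpow : wordPow u (p + 1) <+: u ++ w :=
      (List.prefix_append_right_inj u).mpr <|
        wordPow_prefix_of_append_eq p hy.symm (by rw [Nat.succ_mul] at hlt; omega)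
    exact hp u (hL huw (List.prefix_append u w).isInfix) hu (hL huw hpow.isInfix)
  have hw' : (0 : ℝ) < w.length := by exact_mod_cast List.length_pos_iff.mpr hw
  rw [div_le_div_iff₀ (by positivity) hw']
  have : (w.length : ℝ) ≤ (p + 1) * u.length := by exact_mod_cast hlen
  linarith

theorem BoundedPowers.repulsive {L : Set (List A)} (hL : FactorClosed L)
    (hne : (repulsionSet L).Nonempty) (h : BoundedPowers L) : Repulsive L := by
  obtain ⟨p, hp⟩ := h
  exact (by positivity : (0 : ℝ) < 1 / (p + 1)).trans_le <|
    le_csInf hne fun _ hr => one_div_le_of_mem_repulsionSet hL hp hr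

theorem Repulsive.boundedPowers {L : Set (List A)} (hL : FactorClosed L) (h : Repulsive L) :
    BoundedPowers L := by
  obtain ⟨n, hn⟩ := exists_nat_one_div_lt h
  refine ⟨n + 1, fun u _ hu hpow => ?_⟩
  have hu' : 0 < u.length := List.length_pos_iff.mpr hu
  have hmem : 1 / (n + 1 : ℝ) ∈ repulsionSet L := by
    refine (mem_repulsionSet_iff hL).mpr
      ⟨u, wordPow u (n + 1), hu, ?_, hpow, ⟨u, (wordPow_succ' u (n + 1)).symm⟩, ?_⟩
    · intro h
      simpa [wordPow_length, hu'.ne'] using congrArg List.length h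
    · rw [wordPow_length]
      push_cast
      field_simp
  exact (csInf_le ⟨0, fun _ => repulsionSet_nonneg⟩ hmem).not_gt hn

lemma repulsionSet_nonempty_of_cons_append_mem {L : Set (List A)} (hL : FactorClosed L)
    {a : A} {v : List A} (h : a :: v ++ [a] ∈ L) : (repulsionSet L).Nonempty :=
  ⟨_, (mem_repulsionSet_iff hL).mpr ⟨a :: v, [a], by simp, by simp, h, by simp, rfl⟩⟩

/-- By the pigeonhole principle some letter occurs twice in a point of `Ξ`. -/
lemma exists_cons_append_mem_language [Finite A] {Ξ : Set (ℕ → A)} (hΞ : Ξ.Nonempty) :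
    ∃ (a : A) (v : List A), a :: v ++ [a] ∈ language Ξ := by
  obtain ⟨ξ, hξ⟩ := hΞ
  obtain ⟨i, j, hlt, hij⟩ : ∃ i j, i < j ∧ ξ i = ξ j := by
    obtain ⟨i, j, hne, hij⟩ := Finite.exists_ne_map_eq_of_infinite ξ
    rcases hne.lt_or_gt with h | h
    exacts [⟨i, j, h, hij⟩, ⟨j, i, h, hij.symm⟩]
  obtain ⟨n, rfl⟩ := Nat.exists_eq_add_of_lt hlt
  refine ⟨ξ i, (List.range' (i + 1) n).map ξ, ξ, hξ, i,
    factorAt_iff_eq_map_range'.mpr ?_⟩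
  have hlen : (ξ i :: (List.range' (i + 1) n).map ξ ++ [ξ i]).length = n + 1 + 1 := by simp
  rw [hlen, List.range'_succ, List.range'_1_concat]
  simp [Nat.add_right_comm, hij]

theorem statement0_general {A : Type*} [Fintype A] [TopologicalSpace A]
    (Ξ : Set (ℕ → A)) (hΞ : IsSubshift Ξ) :
    BoundedPowers (language Ξ) ↔ Repulsive (language Ξ) := by
  have hL := factorClosed_language Ξ
  obtain ⟨a, v, hav⟩ := exists_cons_append_mem_language hΞ.nonempty
  exact ⟨BoundedPowers.repulsive hL (repulsionSet_nonempty_of_cons_append_mem hL hav),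
    Repulsive.boundedPowers hL⟩

/-- A right-infinite subshift over a finite alphabet has bounded powers
if and only if it is repulsive. -/
theorem statement0 {A : Type*} [Fintype A] [DecidableEq A] [TopologicalSpace A]
    [DiscreteTopology A] (Ξ : Set (ℕ → A)) (hΞ : IsSubshift Ξ) :
    BoundedPowers (language Ξ) ↔ Repulsive (language Ξ) :=
  statement0_general Ξ hΞ

end Arx1111
end
end

section
/- Let ξ ∈ 𝒜^ℕ be a rich infinite word over a finite alphabet 𝒜, and let u be a factor of ξ. Then u is a palindrome if and only if u is a privileged word. -/
open scoped ENNReal Classical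

noncomputable section

namespace Arx1111

variable {A : Type*}

/-! ### Occurrences, complete first returns, privileged words -/

variable [DecidableEq A]

variable [TopologicalSpace A]

/-- An infinite word is rich if every factor `u` contains exactly `|u| + 1` distinct
palindromic factors (counting the empty word). -/
def IsRich {A : Type*} (ξ : ℕ → A) : Prop :=
  ∀ u : List A, IsFactorOf u ξ →
    Nat.card {v : List A // v <:+: u ∧ v.reverse = v} = u.length + 1


end Arx1111

/-! A rich word has, in each nonempty factor `w`, a palindromic suffix that does not occur in
`w.dropLast`: otherwise `w` would have no more palindromic factors than `w.dropLast`. Such a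
suffix is the longest palindromic suffix of `w`. If `w` is a complete return to a palindrome `v`,
then `v` is a suffix, hence a prefix, of this unioccurrent palindrome, which forces it to be `w`;
so complete returns to palindromes are palindromes, and privileged factors are palindromes by
induction on the order. Conversely a palindrome is a complete return to its longest proper
palindromic prefix `v`: an interior occurrence of `v` would yield a shorter complete return to `v`,
that is, a longer palindromic proper prefix. -/

namespace Arx1111

variable {A : Type*}

theorem length_lt_of_prefix_of_ne {v u : List A} (h : v <+: u) (hne : v ≠ u) :
    v.length < u.length :=
  lt_of_le_of_ne h.length_le (mt h.eq_of_length hne)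

theorem exists_longest_palindromic_proper_prefix {u : List A} (hu : u ≠ []) :
    ∃ v, v <+: u ∧ v ≠ u ∧ v.reverse = v ∧
      ∀ w, w <+: u → w ≠ u → w.reverse = w → w.length ≤ v.length := by
  obtain ⟨v, hv, hmax⟩ := Finset.exists_max_image
    (u.inits.toFinset.filter fun w => w ≠ u ∧ w.reverse = w) List.length
    ⟨[], by simp [hu.symm]⟩
  simp only [Finset.mem_filter, List.mem_toFinset, List.mem_inits] at hv hmax
  exact ⟨v, hv.1, hv.2.1, hv.2.2, fun w hw hwu hwpal => hmax w ⟨hw, hwu, hwpal⟩⟩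

theorem infix_dropLast_or_suffix {v w : List A} (h : v <:+: w) : v <:+: w.dropLast ∨ v <:+ w := by
  obtain ⟨s, t, rfl⟩ := h
  rcases eq_or_ne t [] with rfl | ht
  · exact Or.inr ⟨s, by simp⟩
  · left
    rw [List.dropLast_append_of_ne_nil ht]
    exact ⟨s, t.dropLast, rfl⟩

theorem prefix_of_suffix_of_palindrome {v p : List A} (hv : v.reverse = v) (hp : p.reverse = p)
    (h : v <:+ p) : v <+: p := by
  rw [← hv, ← hp]
  exact List.reverse_prefix.2 h

theorem take_drop_eq_iff {v w : List A} {k : ℕ} (hk : k ≤ w.length) :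
    (w.drop k).take v.length = v ↔ ∃ s t, w = s ++ v ++ t ∧ s.length = k := by
  constructor
  · intro h
    refine ⟨w.take k, w.drop (k + v.length), ?_, by simpa using hk⟩
    conv_lhs => rw [← List.take_append_drop k w, ← List.take_append_drop v.length (w.drop k)]
    rw [h, List.drop_drop, List.append_assoc]
  · rintro ⟨s, t, rfl, rfl⟩
    simp

theorem suffix_of_palindrome_suffix_not_infix_dropLast {p q w : List A} (hp : p <:+ w)
    (hppal : p.reverse = p) (hpw : ¬ p <:+: w.dropLast) (hq : q <:+ w) (hqpal : q.reverse = q) :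
    q <:+ p := by
  rcases List.suffix_or_suffix_of_suffix hq hp with h | h
  · exact h
  obtain ⟨r, rfl⟩ := prefix_of_suffix_of_palindrome hppal hqpal h
  rcases eq_or_ne r [] with rfl | hr
  · simp
  obtain ⟨s, rfl⟩ := hq
  refine absurd ⟨s, r.dropLast, ?_⟩ hpw
  rw [← List.append_assoc, List.dropLast_append_of_ne_nil hr]

theorem isFactorOf_of_infix {ξ : ℕ → A} {u v : List A} (h : v <:+: u) (hu : IsFactorOf u ξ) :
    IsFactorOf v ξ := by
  obtain ⟨k, hk⟩ := hu
  obtain ⟨s, t, rfl⟩ := h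
  refine ⟨k + s.length, ?_⟩
  calc v = ((s ++ v ++ t).drop s.length).take v.length := by simp
    _ = _ := by
      rw [hk]
      refine List.ext_getElem (by simp) fun i _ _ => ?_
      simp [Nat.add_assoc]

theorem IsRich.exists_palindrome_suffix_not_infix_dropLast {ξ : ℕ → A} (hrich : IsRich ξ)
    {w : List A} (hw : IsFactorOf w ξ) (hne : w ≠ []) :
    ∃ p, p <:+ w ∧ p.reverse = p ∧ ¬ p <:+: w.dropLast := by
  by_contra! h
  have hsub : {v | v <:+: w ∧ v.reverse = v} ⊆ {v | v <:+: w.dropLast ∧ v.reverse = v} :=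
    fun v ⟨hv, hvpal⟩ => ⟨(infix_dropLast_or_suffix hv).elim id (h v · hvpal), hvpal⟩
  have hfin : {v | v <:+: w.dropLast ∧ v.reverse = v}.Finite :=
    (List.finite_toSet w.dropLast.sublists).subset fun v hv => List.mem_sublists.2 hv.1.sublist
  have hcard := Nat.card_mono hfin hsub
  have hw' := hrich _ (isFactorOf_of_infix (List.dropLast_prefix w).isInfix hw)
  simp only [Set.coe_ofPred] at hcard
  rw [hrich w hw, hw', List.length_dropLast] at hcard
  have := List.length_pos_iff.2 hne
  omega

section Returns

variable [DecidableEq A]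

open Finset in
theorem occCount_eq_card (v w : List A) :
    occCount v w = #{k ∈ range (w.length + 1) | ∃ s t, w = s ++ v ++ t ∧ s.length = k} := by
  rw [occCount, ← List.toFinset_card_of_nodup (List.nodup_range.filter _), List.toFinset_filter,
    List.toFinset_range]
  congr 1
  refine filter_congr fun k hk => ?_
  rw [beq_iff_eq, take_drop_eq_iff (Nat.lt_succ_iff.1 (mem_range.1 hk))]

theorem isCFR_iff {v w : List A} (hv : v ≠ []) :
    IsCFR v w ↔ v <+: w ∧ v <:+ w ∧ v.length < w.length ∧
      ∀ s t, w = s ++ v ++ t → s = [] ∨ t = [] := by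
  rw [IsCFR, if_neg hv, occCount_eq_card]
  set S := {k ∈ Finset.range (w.length + 1) | ∃ s t, w = s ++ v ++ t ∧ s.length = k}
  have mem_S : ∀ s t, w = s ++ v ++ t → s.length ∈ S := fun s t h => by
    simp only [S, Finset.mem_filter, Finset.mem_range]
    exact ⟨by simp [h], s, t, h, rfl⟩
  have le_of_mem : ∀ k ∈ S, k + v.length ≤ w.length := by
    intro k hk
    obtain ⟨-, s, t, rfl, rfl⟩ := Finset.mem_filter.1 hk
    simp
  refine and_congr_right fun ⟨t₀, hpre⟩ => and_congr_right fun ⟨s₀, hsuf⟩ => ?_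
  have h0 : 0 ∈ S := mem_S [] t₀ (by simp [hpre])
  have hs₀ : s₀.length ∈ S := mem_S s₀ [] (by simp [hsuf])
  have hlen : s₀.length + v.length = w.length := by simp [← hsuf]
  have hv0 : 0 < v.length := List.length_pos_iff.2 hv
  constructor
  · intro hcard
    refine ⟨?_, fun s t hw => ?_⟩
    · by_contra! hle
      have hsub : S ⊆ {0} := fun k hk => Finset.mem_singleton.2 (by have := le_of_mem k hk; omega)
      simpa [hcard] using Finset.card_le_card hsub
    · by_contra! hst
      have hs := mem_S s t hw
      have hlen' : s.length + v.length + t.length = w.length := by simp [hw, Nat.add_assoc]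
      have hs0 : 0 < s.length := List.length_pos_iff.2 hst.1
      have ht0 : 0 < t.length := List.length_pos_iff.2 hst.2
      have hsub : ({0, s.length, s₀.length} : Finset ℕ) ⊆ S := by
        simp [Finset.insert_subset_iff, h0, hs, hs₀]
      have hle := Finset.card_le_card hsub
      rw [Finset.card_eq_three.2 ⟨_, _, _, by omega, by omega, by omega, rfl⟩] at hle
      omega
  · rintro ⟨hlt, hint⟩
    have hS : S = {0, s₀.length} := by
      refine Finset.Subset.antisymm (fun k hk => ?_) (by simp [Finset.insert_subset_iff, h0, hs₀])
      obtain ⟨-, s, t, hw, rfl⟩ := Finset.mem_filter.1 hk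
      rcases hint s t hw with rfl | rfl
      · simp
      · have : s.length + v.length = w.length := by simp [hw]
        exact Finset.mem_insert_of_mem (Finset.mem_singleton.2 (by omega))
    rw [hS, Finset.card_pair (by omega)]

theorem IsCFR.prefix {v w : List A} (h : IsCFR v w) : v <+: w := by
  rw [IsCFR] at h
  split_ifs at h with hv
  · exact hv ▸ List.nil_prefix
  · exact h.1

theorem exists_isCFR_prefix {v s : List A} (hv : v ≠ []) (hs : s ≠ []) (hpre : v <+: s ++ v) :
    ∃ r, r <+: s ++ v ∧ IsCFR v r := by
  by_cases hint : ∃ s' t, s ++ v = s' ++ v ++ t ∧ s' ≠ [] ∧ t ≠ []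
  · obtain ⟨s', t, he, hs', ht⟩ := hint
    have hlen : s'.length < s.length := by
      have := congrArg List.length he
      have := List.length_pos_iff.2 ht
      simp only [List.length_append] at *
      omega
    have h' : s' ++ v <+: s ++ v := ⟨t, he.symm⟩
    obtain ⟨r, hr, hvr⟩ :=
      exists_isCFR_prefix hv hs' (List.prefix_of_prefix_length_le hpre h' (by simp))
    exact ⟨r, hr.trans h', hvr⟩
  · refine ⟨s ++ v, List.prefix_rfl, (isCFR_iff hv).2 ⟨hpre, List.suffix_append _ _,
      by simp [List.length_pos_iff.2 hs], fun s' t h => ?_⟩⟩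
    by_contra! hst
    exact hint ⟨s', t, h, hst⟩
termination_by s.length

theorem IsRich.reverse_eq_of_isCFR {ξ : ℕ → A} (hrich : IsRich ξ) {v w : List A}
    (hw : IsFactorOf w ξ) (hv : v.reverse = v) (hvw : IsCFR v w) : w.reverse = w := by
  by_cases hv0 : v = []
  · rw [IsCFR, if_pos hv0, List.length_eq_one_iff] at hvw
    obtain ⟨a, rfl⟩ := hvw
    rfl
  obtain ⟨hpre, hsuf, hlt, hint⟩ := (isCFR_iff hv0).1 hvw
  obtain ⟨p, hp, hppal, hpw⟩ :=
    hrich.exists_palindrome_suffix_not_infix_dropLast hw (List.ne_nil_of_length_pos (by omega))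
  obtain ⟨r, rfl⟩ := prefix_of_suffix_of_palindrome hv hppal
    (suffix_of_palindrome_suffix_not_infix_dropLast hp hppal hpw hsuf hv)
  obtain ⟨s, rfl⟩ := hp
  rcases hint s r (List.append_assoc _ _ _).symm with rfl | rfl
  · simpa using hppal
  · obtain ⟨t, ht⟩ := hpre
    have ht0 : t ≠ [] := by
      rintro rfl
      have := congrArg List.length ht
      simp only [List.length_append, List.length_nil] at this hlt
      omega
    refine absurd ?_ hpw
    rw [← ht, List.dropLast_append_of_ne_nil ht0, List.append_nil]
    exact (List.prefix_append _ _).isInfix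

theorem IsRich.reverse_eq_of_privOrder {ξ : ℕ → A} (hrich : IsRich ξ) {n : ℕ} {u : List A}
    (hu : PrivOrder n u) (huξ : IsFactorOf u ξ) : u.reverse = u := by
  induction hu with
  | zero => rfl
  | succ _ hvu ih =>
    exact hrich.reverse_eq_of_isCFR huξ (ih (isFactorOf_of_infix hvu.prefix.isInfix huξ)) hvu

theorem IsRich.isCFR_of_longest_palindromic_proper_prefix {ξ : ℕ → A} (hrich : IsRich ξ)
    {u v : List A} (hu : IsFactorOf u ξ) (hupal : u.reverse = u) (hvu : v <+: u) (hne : v ≠ u)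
    (hv : v.reverse = v)
    (hmax : ∀ w, w <+: u → w ≠ u → w.reverse = w → w.length ≤ v.length) :
    IsCFR v u := by
  have hlt := length_lt_of_prefix_of_ne hvu hne
  rcases eq_or_ne v [] with rfl | hv0
  · rw [IsCFR, if_pos rfl]
    obtain ⟨a, u', rfl⟩ := List.exists_cons_of_ne_nil hne.symm
    by_contra h1
    have := hmax [a] (by simp) (by simpa [eq_comm] using h1) rfl
    simp only [List.length_cons, List.length_nil] at this h1
    omega
  refine (isCFR_iff hv0).2 ⟨hvu, ?_, hlt, fun s t hst => ?_⟩
  · rw [← hv, ← hupal]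
    exact List.reverse_suffix.2 hvu
  by_contra! hst0
  have hsv : s ++ v <+: u := ⟨t, hst.symm⟩
  obtain ⟨r, hr, hvr⟩ :=
    exists_isCFR_prefix hv0 hst0.1 (List.prefix_of_prefix_length_le hvu hsv (by simp))
  have hru : r <+: u := hr.trans hsv
  have hru_lt : r.length < u.length := by
    have := congrArg List.length hst
    have := List.length_pos_iff.2 hst0.2
    have := hr.length_le
    simp only [List.length_append] at *
    omega
  have hr_le := hmax r hru (by rintro rfl; omega)
    (hrich.reverse_eq_of_isCFR (isFactorOf_of_infix hru.isInfix hu) hv hvr)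
  have := ((isCFR_iff hv0).1 hvr).2.2.1
  omega

theorem IsRich.isPrivileged_of_reverse_eq {ξ : ℕ → A} (hrich : IsRich ξ) {u : List A}
    (hu : IsFactorOf u ξ) (hupal : u.reverse = u) : IsPrivileged u := by
  rcases eq_or_ne u [] with rfl | hu0
  · exact ⟨0, .zero⟩
  obtain ⟨v, hvu, hne, hv, hmax⟩ := exists_longest_palindromic_proper_prefix hu0
  obtain ⟨n, hn⟩ := hrich.isPrivileged_of_reverse_eq (isFactorOf_of_infix hvu.isInfix hu) hv
  exact ⟨n + 1,
    .succ hn (hrich.isCFR_of_longest_palindromic_proper_prefix hu hupal hvu hne hv hmax)⟩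
termination_by u.length
decreasing_by exact length_lt_of_prefix_of_ne hvu hne

end Returns

theorem statement2_general {A : Type*} [DecidableEq A] (ξ : ℕ → A) (hrich : IsRich ξ)
    (u : List A) (hu : IsFactorOf u ξ) : u.reverse = u ↔ IsPrivileged u :=
  ⟨hrich.isPrivileged_of_reverse_eq hu, fun ⟨_, hn⟩ => hrich.reverse_eq_of_privOrder hn hu⟩

/-- For a factor of a rich infinite word over a finite alphabet,
being a palindrome is equivalent to being privileged. -/
theorem statement2 {A : Type*} [Fintype A] [DecidableEq A] (ξ : ℕ → A) (hrich : IsRich ξ)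
    (u : List A) (hu : IsFactorOf u ξ) : u.reverse = u ↔ IsPrivileged u :=
  statement2_general ξ hrich u hu

end Arx1111
end
end

section
/- Let Ξ be a minimal and aperiodic right-infinite subshift over a finite alphabet. If for every n ∈ ℕ the subshift has exactly one right-special word of length n, then Ξ is right-special balanced. -/
/-!
If no right-special word `r` with `u ⪯ r ≺ u'` existed, every occurrence of `u` in a point of
the subshift would be forced, letter by letter, to extend to an occurrence of `u'`. Since `u` is
also a suffix of `u'`, this yields a new occurrence of `u` exactly `|u'| - |u|` letters later;
iterating makes the point eventually periodic, contradicting aperiodicity.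

Since suffixes of right-special words are right-special, uniqueness of the right-special word of
each length makes every right-special word a suffix of all longer ones. So of two right-special
words `r₁ ≺ r₂` between `u` and `u'`, the shorter is a suffix of the longer, and its prefix `u`
occurs in `u'` strictly between the occurrences of `u` as a prefix and as a suffix, which a
complete first return does not allow.
-/

open scoped ENNReal Classical

noncomputable section

namespace Arx1111

variable {A : Type*}

section Words

theorem factorAt_iff {u : List A} {ξ : ℕ → A} {k : ℕ} :
    FactorAt u ξ k ↔ ∀ i (hi : i < u.length), u[i] = ξ (k + i) := by
  constructor
  · intro h i hi
    rw [List.getElem_of_eq h hi]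
    simp
  · intro h
    exact List.ext_getElem (by simp) fun i hi _ => by simp [h i hi]

theorem factorAt_append {v w : List A} {ξ : ℕ → A} {k : ℕ} :
    FactorAt (v ++ w) ξ k ↔ FactorAt v ξ k ∧ FactorAt w ξ (k + v.length) := by
  simp only [FactorAt, List.length_append, List.range_add, List.map_append, List.map_map]
  rw [List.append_eq_append_iff_of_size_eq_left (by simp)]
  simp [Function.comp_def, Nat.add_assoc]

theorem factorAt_singleton {a : A} {ξ : ℕ → A} {k : ℕ} : FactorAt [a] ξ k ↔ ξ k = a := by
  simp [FactorAt, eq_comm]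

theorem shift_iterate_apply (ξ : ℕ → A) (m n : ℕ) : shift^[m] ξ n = ξ (n + m) := by
  induction m generalizing ξ with
  | zero => rfl
  | succ m ih => simp [Function.iterate_succ_apply, ih, shift, Nat.add_assoc]

theorem factorAt_shift_iterate {u : List A} {ξ : ℕ → A} {m k : ℕ} :
    FactorAt u (shift^[m] ξ) k ↔ FactorAt u ξ (k + m) := by
  simp only [FactorAt, shift_iterate_apply, Nat.add_right_comm k]

theorem mem_language_of_isInfix {Ξ : Set (ℕ → A)} {v w : List A} (h : v <:+: w)
    (hw : w ∈ language Ξ) : v ∈ language Ξ := by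
  obtain ⟨ξ, hξ, k, hk⟩ := hw
  obtain ⟨s, t, rfl⟩ := h
  exact ⟨ξ, hξ, k + s.length, (factorAt_append.1 (factorAt_append.1 hk).1).2⟩

theorem PPrefix.length_lt {v w : List A} (h : PPrefix v w) : v.length < w.length :=
  lt_of_le_of_ne h.1.length_le fun hl => h.2 (h.1.eq_of_length hl)

theorem iterate_shift_eq_self_of_forall_factorAt {w : List A} {η : ℕ → A}
    (h : ∀ n, FactorAt w η (n * w.length)) : shift^[w.length] η = η := by
  set p := w.length
  rcases Nat.eq_zero_or_pos p with hp | hp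
  · rw [hp]; rfl
  have hη : ∀ i, η i = w[i % p]'(Nat.mod_lt i hp) := fun i => by
    rw [factorAt_iff.1 (h (i / p)), Nat.div_add_mod']
  funext i
  rw [shift_iterate_apply, hη, hη]
  simp [Nat.add_mod_right]

end Words

section RightSpecial

variable {Ξ : Set (ℕ → A)}

theorem RightSpecial.of_isSuffix {r s : List A} (h : RightSpecial (language Ξ) r)
    (hs : s <:+ r) : RightSpecial (language Ξ) s := by
  obtain ⟨hr, a, b, hab, ha, hb⟩ := h
  obtain ⟨t, rfl⟩ := hs
  have hext : ∀ x : A, t ++ s ++ [x] ∈ language Ξ → s ++ [x] ∈ language Ξ := fun x hx =>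
    mem_language_of_isInfix (List.append_assoc t s [x] ▸ List.suffix_append t _).isInfix hx
  exact ⟨mem_language_of_isInfix (List.suffix_append t s).isInfix hr, a, b, hab, hext a ha,
    hext b hb⟩

theorem RightSpecial.isSuffix_of_length_le
    (huniq : ∀ n : ℕ, ∃! r, RightSpecial (language Ξ) r ∧ r.length = n) {r₁ r₂ : List A}
    (h₁ : RightSpecial (language Ξ) r₁) (h₂ : RightSpecial (language Ξ) r₂)
    (hle : r₁.length ≤ r₂.length) : r₁ <:+ r₂ := by
  have hs := h₂.of_isSuffix (List.drop_suffix (r₂.length - r₁.length) r₂)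
  have heq : r₂.drop (r₂.length - r₁.length) = r₁ :=
    (huniq r₁.length).unique ⟨hs, by rw [List.length_drop]; omega⟩ ⟨h₁, rfl⟩
  exact heq ▸ List.drop_suffix _ _

theorem FactorAt.snoc_of_not_rightSpecial {q : List A} {a : A} {ξ : ℕ → A} {k : ℕ}
    (h : FactorAt q ξ k) (hξ : ξ ∈ Ξ) (hq : ¬RightSpecial (language Ξ) q)
    (ha : q ++ [a] ∈ language Ξ) : FactorAt (q ++ [a]) ξ k := by
  refine factorAt_append.2 ⟨h, factorAt_singleton.2 ?_⟩
  by_contra hne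
  have hnext : q ++ [ξ (k + q.length)] ∈ language Ξ :=
    ⟨ξ, hξ, k, factorAt_append.2 ⟨h, factorAt_singleton.2 rfl⟩⟩
  exact hq ⟨mem_language_of_isInfix (List.prefix_append q [a]).isInfix ha, _, a, hne, hnext, ha⟩

theorem FactorAt.of_forall_not_rightSpecial {u u' : List A} {ξ : ℕ → A} {k : ℕ}
    (h : FactorAt u ξ k) (hξ : ξ ∈ Ξ) (hu' : u' ∈ language Ξ) (hpre : u <+: u')
    (hno : ∀ r, u <+: r → PPrefix r u' → ¬RightSpecial (language Ξ) r) : FactorAt u' ξ k := by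
  suffices ∀ p, u <+: p → p <+: u' → FactorAt p ξ k from this u' hpre (List.prefix_refl u')
  intro p
  induction p using List.reverseRecOn with
  | nil => intro hu _; rwa [List.prefix_nil.1 hu] at h
  | append_singleton q a ih =>
    intro hu hqa
    rcases List.prefix_concat_iff.1 hu with rfl | huq
    · exact h
    have hq : PPrefix q u' :=
      ⟨(List.prefix_append q [a]).trans hqa, fun hqu => by
        simpa [hqu] using hqa.length_le⟩
    exact (ih huq hq.1).snoc_of_not_rightSpecial hξ (hno q huq hq)
      (mem_language_of_isInfix hqa.isInfix hu')

end RightSpecial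

theorem IsSubshift.iterate_shift_mem [TopologicalSpace A] {Ξ : Set (ℕ → A)}
    (hΞ : IsSubshift Ξ) {ξ : ℕ → A} (hξ : ξ ∈ Ξ) (k : ℕ) : shift^[k] ξ ∈ Ξ := by
  induction k with
  | zero => exact hξ
  | succ k ih => exact Function.iterate_succ_apply' shift k ξ ▸ hΞ.shift_mem _ ih

theorem exists_rightSpecial_between [TopologicalSpace A] {Ξ : Set (ℕ → A)}
    (hΞ : IsSubshift Ξ) (hap : Aperiodic Ξ) {u u' : List A} (hu' : u' ∈ language Ξ)
    (hpre : u <+: u') (hsuf : u <:+ u') (hlt : u.length < u'.length) :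
    ∃ r, RightSpecial (language Ξ) r ∧ u <+: r ∧ PPrefix r u' := by
  by_contra hno
  have hforced : ∀ η ∈ Ξ, ∀ k, FactorAt u η k → FactorAt u' η k := fun η hη k hk =>
    hk.of_forall_not_rightSpecial hη hu' hpre fun r hur hru hrs => hno ⟨r, hrs, hur, hru⟩
  obtain ⟨c, rfl⟩ := hsuf
  obtain ⟨ξ, hξ, k, hk⟩ := mem_language_of_isInfix hpre.isInfix hu'
  have hη := hΞ.iterate_shift_mem hξ k
  have hperiod : ∀ n, FactorAt (c ++ u) (shift^[k] ξ) (n * c.length) := by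
    intro n
    induction n with
    | zero => simpa using hforced _ hη 0 (factorAt_shift_iterate.2 (by simpa using hk))
    | succ n ih => exact hforced _ hη _ (by simpa [Nat.succ_mul] using (factorAt_append.1 ih).2)
  have hc := hap _ hη _ (iterate_shift_eq_self_of_forall_factorAt fun n =>
    (factorAt_append.1 (hperiod n)).1)
  simp [hc] at hlt

section CompleteFirstReturn

variable [DecidableEq A] {u u' : List A}

theorem occCount_eq_card_s5 (u w : List A) :
    occCount u w = ((Finset.range (w.length + 1)).filter fun k => u <+: w.drop k).card := by
  rw [occCount, ← List.toFinset_card_of_nodup (List.nodup_range.filter _), List.toFinset_filter,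
    List.toFinset_range]
  congr 1
  ext k
  rw [Finset.mem_filter, Finset.mem_filter, beq_iff_eq, List.prefix_iff_eq_take (l₂ := w.drop k),
    eq_comm]

theorem IsCFR.isPrefix (h : IsCFR u u') : u <+: u' := by
  unfold IsCFR at h
  split_ifs at h with hu
  · exact hu ▸ List.nil_prefix
  · exact h.1

theorem IsCFR.isSuffix (h : IsCFR u u') : u <:+ u' := by
  unfold IsCFR at h
  split_ifs at h with hu
  · exact hu ▸ List.nil_suffix
  · exact h.2.1

theorem IsCFR.length_lt (h : IsCFR u u') : u.length < u'.length := by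
  unfold IsCFR at h
  split_ifs at h with hu
  · simp [hu, h]
  by_contra hle
  have hsub : ((Finset.range (u'.length + 1)).filter fun k => u <+: u'.drop k) ⊆ {0} := by
    intro k hk
    have := (Finset.mem_filter.1 hk).2.length_le
    simp only [List.length_drop, Finset.mem_singleton] at this ⊢
    have := List.length_pos_iff.2 hu
    omega
  have := Finset.card_le_card hsub
  rw [← occCount_eq_card_s5, h.2.2] at this
  simp at this

theorem IsCFR.not_isPrefix_drop (h : IsCFR u u') {k : ℕ} (hk₀ : 0 < k)
    (hk : k < u'.length - u.length) : ¬u <+: u'.drop k := by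
  intro hocc
  unfold IsCFR at h
  split_ifs at h with hu
  · omega
  obtain ⟨hpre, hsuf, hcount⟩ := h
  have hsub : {0, k, u'.length - u.length} ⊆
      (Finset.range (u'.length + 1)).filter fun k => u <+: u'.drop k := by
    intro j hj
    simp only [Finset.mem_insert, Finset.mem_singleton] at hj
    rw [Finset.mem_filter, Finset.mem_range]
    rcases hj with rfl | rfl | rfl
    · exact ⟨by omega, by simpa using hpre⟩
    · exact ⟨by omega, hocc⟩
    · exact ⟨by omega, List.suffix_iff_eq_drop.1 hsuf ▸ List.prefix_refl _⟩
  have := Finset.card_le_card hsub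
  rw [← occCount_eq_card_s5, hcount,
    Finset.card_insert_of_notMem (by simp only [Finset.mem_insert, Finset.mem_singleton]; omega),
    Finset.card_pair (by omega)] at this
  omega

theorem eq_of_rightSpecial_between {Ξ : Set (ℕ → A)}
    (huniq : ∀ n : ℕ, ∃! r, RightSpecial (language Ξ) r ∧ r.length = n) (hcfr : IsCFR u u')
    {r₁ r₂ : List A} (h₁ : RightSpecial (language Ξ) r₁ ∧ u <+: r₁ ∧ PPrefix r₁ u')
    (h₂ : RightSpecial (language Ξ) r₂ ∧ u <+: r₂ ∧ PPrefix r₂ u') : r₁ = r₂ := by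
  wlog hle : r₁.length ≤ r₂.length generalizing r₁ r₂
  · exact (this h₂ h₁ (Nat.le_of_not_le hle)).symm
  obtain ⟨d, rfl⟩ := RightSpecial.isSuffix_of_length_le huniq h₁.1 h₂.1 hle
  obtain ⟨z, rfl⟩ := h₂.2.2.1
  by_contra hne
  have hd : 0 < d.length := List.length_pos_iff.2 fun hd => hne (by simp [hd])
  -- the shorter word `r₁` starts a third occurrence of `u`, strictly inside `u'`
  have hocc : u <+: (d ++ r₁ ++ z).drop d.length := by
    simpa using h₁.2.1.trans (List.prefix_append r₁ z)
  have hlt := h₂.2.2.length_lt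
  have hu := h₁.2.1.length_le
  simp only [List.length_append] at hlt
  exact hcfr.not_isPrefix_drop hd (by simp only [List.length_append]; omega) hocc

end CompleteFirstReturn

theorem statement5_general {A : Type*} [DecidableEq A] [TopologicalSpace A]
    (Ξ : Set (ℕ → A)) (hΞ : IsSubshift Ξ)
    (hap : Aperiodic Ξ)
    (huniq : ∀ n : ℕ, ∃! r, RightSpecial (language Ξ) r ∧ r.length = n) :
    RSBalanced (language Ξ) := by
  intro u _ _ u' ⟨hu', hcfr⟩
  obtain ⟨r, hr⟩ :=
    exists_rightSpecial_between hΞ hap hu' hcfr.isPrefix hcfr.isSuffix hcfr.length_lt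
  exact ⟨r, hr, fun r' hr' => eq_of_rightSpecial_between huniq hcfr hr' hr⟩

/-- A minimal and aperiodic right-infinite subshift over a finite
alphabet with a unique right-special word per length is right-special balanced. -/
theorem statement5 {A : Type*} [Fintype A] [DecidableEq A] [TopologicalSpace A]
    [DiscreteTopology A] (Ξ : Set (ℕ → A)) (hΞ : IsSubshift Ξ) (hmin : IsMinimal Ξ)
    (hap : Aperiodic Ξ)
    (huniq : ∀ n : ℕ, ∃! r, RightSpecial (language Ξ) r ∧ r.length = n) :
    RSBalanced (language Ξ) :=
  statement5_general Ξ hΞ hap huniq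

end Arx1111
end
end
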